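/- Let G be a POMDP with absorbing target set T, positive costs, and Supp(λ0) ∈ BeliefWin(G,T). For every k ≥ 1, the probability α_k = P^{σ*_k}_{λ0}(T is not reached within the first k steps) satisfies α_k ≤ optCost / k. -/

import Mathlib

open Finset Filter
open scoped Classical

set_option linter.unusedSectionVars false

noncomputable section

/-- A finite history of a play: the current state together with the
(reversed) list of past steps; an entry `(a, s')` means: the action `a`
was taken from the state `s'` (leading to the next recorded state). -/
abbrev Hist (S A : Type) := S × List (A × S)

/-- The observation–action sequence of a history. -/
def obsHist {S A Z : Type} (O : S → Z) (h : Hist S A) : Z × List (A × Z) :=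
  (O h.1, h.2.map fun p => (p.1, O p.2))

/-- An observation-based (randomized, history-dependent) strategy. -/
structure Strategy (S A Z : Type) [Fintype A] (O : S → Z) where
  act : Hist S A → A → ℝ
  act_nonneg : ∀ h a, 0 ≤ act h a
  act_sum : ∀ h, ∑ a, act h a = 1
  obsBased : ∀ h h', obsHist O h = obsHist O h' → act h = act h'

/-- A partially observable Markov decision process. -/
structure POMDP (S A Z : Type) [Fintype S] [Fintype A] [Fintype Z] where
  δ : S → A → S → ℝ
  δ_nonneg : ∀ s a s', 0 ≤ δ s a s'
  δ_sum : ∀ s a, ∑ s', δ s a s' = 1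
  obs : S → Z
  init : S → ℝ
  init_nonneg : ∀ s, 0 ≤ init s
  init_sum : ∑ s, init s = 1
  init_obs : ∀ s s', 0 < init s → 0 < init s' → obs s = obs s'

namespace POMDP

variable {S A Z : Type} [Fintype S] [Fintype A] [Fintype Z]

/-- The target set `T` consists of absorbing states. -/
def Absorbing (M : POMDP S A Z) (T : Set S) : Prop :=
  ∀ t ∈ T, ∀ a, M.δ t a t = 1

/-- Probability that after `n` steps the process has followed exactly the
history `(s, l)` (so `l` has length `n`). -/
def hprobAux (M : POMDP S A Z) (σ : Strategy S A Z M.obs) : ℕ → S → List (A × S) → ℝ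
  | 0, s, l => if l = [] then M.init s else 0
  | n+1, s, l =>
    match l with
    | [] => 0
    | (a, s') :: rest => hprobAux M σ n s' rest * σ.act (s', rest) a * M.δ s' a s

def hprob (M : POMDP S A Z) (σ : Strategy S A Z M.obs) (n : ℕ) (h : Hist S A) : ℝ :=
  M.hprobAux σ n h.1 h.2

/-- The state sequence of a history visits the set `T`. -/
def visitsT (T : Set S) (h : Hist S A) : Prop :=
  h.1 ∈ T ∨ ∃ p ∈ h.2, p.2 ∈ T

/-- Probability of reaching `T` within the first `n` steps. -/
def probReachBy (M : POMDP S A Z) (T : Set S) (σ : Strategy S A Z M.obs) (n : ℕ) : ℝ :=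
  ∑' h : Hist S A, if visitsT T h then M.hprob σ n h else 0

/-- Probability of the reachability objective `Reach(T)`. -/
def probReach (M : POMDP S A Z) (T : Set S) (σ : Strategy S A Z M.obs) : ℝ :=
  ⨆ n, M.probReachBy T σ n

/-- The strategy `σ` is almost-sure winning for `Reach(T)`. -/
def AlmostSure (M : POMDP S A Z) (T : Set S) (σ : Strategy S A Z M.obs) : Prop :=
  M.probReach T σ = 1

/-- Accumulated cost along a history. -/
def totalCostAux (c : S → A → ℝ) : S → List (A × S) → ℝ
  | _, [] => 0
  | _, (a, s') :: rest => totalCostAux c s' rest + c s' a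

def totalCostH (c : S → A → ℝ) (h : Hist S A) : ℝ := totalCostAux c h.1 h.2

/-- Expected total cost of the first `n` steps, i.e. `E[Total_{n-1}]`
(in particular `E[Total_k] = expTotalSteps M c σ (k+1)`). -/
def expTotalSteps (M : POMDP S A Z) (c : S → A → ℝ) (σ : Strategy S A Z M.obs) (n : ℕ) : ℝ :=
  ∑' h : Hist S A, M.hprob σ n h * totalCostH c h

/-- The value `Val(σ) = E[Total]` of a strategy, as the limit (limsup) of the
expected costs of the finite prefixes. -/
def Val (M : POMDP S A Z) (c : S → A → ℝ) (σ : Strategy S A Z M.obs) : EReal :=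
  Filter.limsup (fun n => ((M.expTotalSteps c σ n : ℝ) : EReal)) Filter.atTop

/-- `optCost`: the infimum of the values of almost-sure winning strategies. -/
def optCost (M : POMDP S A Z) (T : Set S) (c : S → A → ℝ) : EReal :=
  ⨅ σ : {σ : Strategy S A Z M.obs // M.AlmostSure T σ}, M.Val c σ.1

end POMDP

namespace POMDP

variable {S A Z : Type} [Fintype S] [Fintype A] [Fintype Z]

/-- Uniform distribution over a finite set of states. -/
def uniformS (U : Finset S) : S → ℝ := fun s => if s ∈ U then ((U.card : ℝ))⁻¹ else 0

lemma uniformS_nonneg (U : Finset S) (s : S) : 0 ≤ uniformS U s := by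
  unfold uniformS; split_ifs <;> positivity

lemma uniformS_sum (U : Finset S) (h : U.Nonempty) : ∑ s, uniformS U s = 1 := by
  unfold uniformS
  rw [Finset.sum_ite_mem, Finset.univ_inter, Finset.sum_const, nsmul_eq_mul,
    mul_inv_cancel₀]
  exact_mod_cast Finset.card_ne_zero.mpr h

lemma uniformS_mem {U : Finset S} {s : S} (h : 0 < uniformS U s) : s ∈ U := by
  by_contra hc; simp [uniformS, hc] at h

/-- The POMDP `M` with the initial distribution replaced by the uniform
distribution over `U`. -/
def reinit (M : POMDP S A Z) (U : Finset S) (hU : U.Nonempty)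
    (hobs : ∀ s ∈ U, ∀ s' ∈ U, M.obs s = M.obs s') : POMDP S A Z :=
  { M with
    init := uniformS U
    init_nonneg := uniformS_nonneg U
    init_sum := uniformS_sum U hU
    init_obs := fun s s' hs hs' => hobs s (uniformS_mem hs) s' (uniformS_mem hs') }

/-- The POMDP `M` with the initial distribution replaced by the Dirac
distribution at `s0`. -/
def resetDirac (M : POMDP S A Z) (s0 : S) : POMDP S A Z :=
  { M with
    init := fun s => if s = s0 then 1 else 0
    init_nonneg := by intro s; split_ifs <;> norm_num
    init_sum := by simp
    init_obs := by
      intro s s' hs hs'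
      have h1 : s = s0 := by by_contra hc; simp [hc] at hs
      have h2 : s' = s0 := by by_contra hc; simp [hc] at hs'
      rw [h1, h2] }

/-- The set of almost-sure winning belief-supports: those `U` from which
(with the uniform initial distribution on `U`) some strategy wins
`Reach(T)` almost-surely. -/
def BeliefWin (M : POMDP S A Z) (T : Set S) : Set (Finset S) :=
  {U | ∃ (hU : U.Nonempty) (hobs : ∀ s ∈ U, ∀ s' ∈ U, M.obs s = M.obs s'),
      ∃ σ : Strategy S A Z M.obs, (M.reinit U hU hobs).AlmostSure T σ}

/-- Belief-support update. -/
def updateF (M : POMDP S A Z) (U : Finset S) (z : Z) (a : A) : Finset S :=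
  univ.filter (fun t => M.obs t = z ∧ ∃ s ∈ U, 0 < M.δ s a t)

/-- Allowed actions at a belief-support `U`. -/
def AllowSet (M : POMDP S A Z) (T : Set S) (U : Finset S) : Set A :=
  {a | ∀ z, (M.updateF U z a).Nonempty → M.updateF U z a ∈ M.BeliefWin T}

def allowFin (M : POMDP S A Z) (T : Set S) (U : Finset S) : Finset A :=
  univ.filter (· ∈ M.AllowSet T U)

/-- The support of the initial distribution, as a belief-support. -/
def suppInitF (M : POMDP S A Z) : Finset S := univ.filter (fun s => 0 < M.init s)

/-- Belief-support after a history, starting from the initial belief-support `U0`. -/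
def beliefOfFromAux (M : POMDP S A Z) (U0 : Finset S) : S → List (A × S) → Finset S
  | s, [] => U0.filter (fun t => M.obs t = M.obs s)
  | s, (a, s') :: rest => M.updateF (M.beliefOfFromAux U0 s' rest) (M.obs s) a

def beliefOfFrom (M : POMDP S A Z) (U0 : Finset S) (h : Hist S A) : Finset S :=
  M.beliefOfFromAux U0 h.1 h.2

/-- Belief-support after a history (with the initial belief-support being
the support of the initial distribution). -/
def beliefOf (M : POMDP S A Z) (h : Hist S A) : Finset S :=
  M.beliefOfFrom M.suppInitF h

lemma beliefOfFromAux_obs (M : POMDP S A Z) (U0 : Finset S) :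
    ∀ (l l' : List (A × S)) (s s' : S),
      l.map (fun p => (p.1, M.obs p.2)) = l'.map (fun p => (p.1, M.obs p.2)) →
      M.obs s = M.obs s' →
      M.beliefOfFromAux U0 s l = M.beliefOfFromAux U0 s' l'
  | [], [], s, s', _, hs => by simp [beliefOfFromAux, hs]
  | [], (_ :: _), _, _, hmap, _ => by simp at hmap
  | (_ :: _), [], _, _, hmap, _ => by simp at hmap
  | ((a, t) :: r), ((a', t') :: r'), s, s', hmap, hs => by
      simp only [List.map_cons, List.cons.injEq, Prod.mk.injEq] at hmap
      obtain ⟨⟨ha, ht⟩, hr⟩ := hmap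
      simp only [beliefOfFromAux]
      rw [M.beliefOfFromAux_obs U0 r r' t t' hr ht, hs, ha]

/-- Uniform distribution over a finite set of actions. -/
def uniformA (F : Finset A) : A → ℝ := fun a => if a ∈ F then ((F.card : ℝ))⁻¹ else 0

lemma uniformA_nonneg (F : Finset A) (a : A) : 0 ≤ uniformA F a := by
  unfold uniformA; split_ifs <;> positivity

lemma uniformA_sum (F : Finset A) (h : F.Nonempty) : ∑ a, uniformA F a = 1 := by
  unfold uniformA
  rw [Finset.sum_ite_mem, Finset.univ_inter, Finset.sum_const, nsmul_eq_mul,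
    mul_inv_cancel₀]
  exact_mod_cast Finset.card_ne_zero.mpr h

/-- The action distribution of `σ_Allow` (with initial belief-support `U0`):
uniform over the allowed actions of the current belief-support (with a
uniform fallback where no action is allowed). -/
def actAllowFrom (M : POMDP S A Z) (T : Set S) (U0 : Finset S) (h : Hist S A) : A → ℝ :=
  if (M.allowFin T (M.beliefOfFrom U0 h)).Nonempty
  then uniformA (M.allowFin T (M.beliefOfFrom U0 h))
  else uniformA (univ : Finset A)

/-- The belief-support based strategy `σ_Allow` (tracking beliefs from `U0`). -/
def stratAllowFrom [Nonempty A] (M : POMDP S A Z) (T : Set S) (U0 : Finset S) :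
    Strategy S A Z M.obs where
  act := M.actAllowFrom T U0
  act_nonneg := by
    intro h a; unfold actAllowFrom; split_ifs <;> exact uniformA_nonneg _ _
  act_sum := by
    intro h; unfold actAllowFrom; split_ifs with hne
    · exact uniformA_sum _ hne
    · exact uniformA_sum _ univ_nonempty
  obsBased := by
    intro h h' hobs
    have : M.beliefOfFrom U0 h = M.beliefOfFrom U0 h' := by
      unfold beliefOfFrom
      exact M.beliefOfFromAux_obs U0 h.2 h'.2 h.1 h'.1
        (congrArg Prod.snd hobs) (congrArg Prod.fst hobs)
    unfold actAllowFrom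
    rw [this]

/-- `σ_Allow`. -/
def stratAllow [Nonempty A] (M : POMDP S A Z) (T : Set S) : Strategy S A Z M.obs :=
  M.stratAllowFrom T M.suppInitF

/-- `T_Allow(s, U)`: the expected total cost of `σ_Allow` started in the
state `s` with the initial belief-support `U`. -/
def TAllow [Nonempty A] (M : POMDP S A Z) (T : Set S) (c : S → A → ℝ) (s : S) (U : Finset S) :
    EReal :=
  (M.resetDirac s).Val c (M.stratAllowFrom T U)

/-- `U_Allow`: the maximal expected total cost of `σ_Allow` over all
almost-sure winning belief-supports `U` and states `s ∈ U`. -/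
def UAllow [Nonempty A] (M : POMDP S A Z) (T : Set S) (c : S → A → ℝ) : EReal :=
  ⨆ U ∈ M.BeliefWin T, ⨆ s ∈ U, M.TAllow T c s U

end POMDP

namespace POMDP

variable {S A Z : Type} [Fintype S] [Fintype A] [Fintype Z]

/-- Normalization of a nonnegative function into a distribution. -/
def normalize (f : S → ℝ) : S → ℝ := fun t => f t / ∑ u, f u

/-- Support of an information state. -/
def suppF (b : S → ℝ) : Finset S := univ.filter (fun s => b s ≠ 0)

/-- The information state (posterior distribution) after a history. -/
def infoOfAux (M : POMDP S A Z) : S → List (A × S) → S → ℝ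
  | s, [] => normalize (fun t => if M.obs t = M.obs s then M.init t else 0)
  | s, (a, s') :: rest =>
      normalize (fun t => if M.obs t = M.obs s then ∑ u, M.infoOfAux s' rest u * M.δ u a t else 0)

def infoOf (M : POMDP S A Z) (h : Hist S A) : S → ℝ := M.infoOfAux h.1 h.2

lemma infoOfAux_obs (M : POMDP S A Z) :
    ∀ (l l' : List (A × S)) (s s' : S),
      l.map (fun p => (p.1, M.obs p.2)) = l'.map (fun p => (p.1, M.obs p.2)) →
      M.obs s = M.obs s' →
      M.infoOfAux s l = M.infoOfAux s' l'
  | [], [], s, s', _, hs => by simp [infoOfAux, hs]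
  | [], (_ :: _), _, _, hmap, _ => by simp at hmap
  | (_ :: _), [], _, _, hmap, _ => by simp at hmap
  | ((a, t) :: r), ((a', t') :: r'), s, s', hmap, hs => by
      simp only [List.map_cons, List.cons.injEq, Prod.mk.injEq] at hmap
      obtain ⟨⟨ha, ht⟩, hr⟩ := hmap
      simp only [infoOfAux]
      rw [M.infoOfAux_obs r r' t t' hr ht, hs, ha]

/-- Expected one-step cost `c'(b,a)` at an information state. -/
def cinfo (c : S → A → ℝ) (b : S → ℝ) (a : A) : ℝ := ∑ s, b s * c s a

/-- Probability of observing `z` after playing `a` at information state `b`. -/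
def obsProb (M : POMDP S A Z) (b : S → ℝ) (a : A) (z : Z) : ℝ :=
  ∑ t, if M.obs t = z then ∑ u, b u * M.δ u a t else 0

/-- Bayesian update of the information state `b` under action `a` and
observation `z`. -/
def postInfo (M : POMDP S A Z) (b : S → ℝ) (a : A) (z : Z) : S → ℝ :=
  normalize (fun t => if M.obs t = z then ∑ u, b u * M.δ u a t else 0)

/-- The allowed-action-restricted finite-horizon value iteration `V*_n`. -/
def Vstar (M : POMDP S A Z) (T : Set S) (c : S → A → ℝ) : ℕ → (S → ℝ) → ℝ
  | 0, _ => 0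
  | n+1, b =>
    if h : (M.allowFin T (suppF b)).Nonempty then
      (M.allowFin T (suppF b)).inf' h
        (fun a => cinfo c b a + ∑ z, M.obsProb b a z * M.Vstar T c n (M.postInfo b a z))
    else 0

/-- An allowed action attaining the minimum of the value iteration with
`n` steps remaining at information state `b`. -/
def foAct [Nonempty A] (M : POMDP S A Z) (T : Set S) (c : S → A → ℝ) : ℕ → (S → ℝ) → A
  | 0, _ => Classical.arbitrary A
  | n+1, b =>
    if h : (M.allowFin T (suppF b)).Nonempty then
      Classical.choose (Finset.exists_mem_eq_inf' h
        (fun a => cinfo c b a + ∑ z, M.obsProb b a z * M.Vstar T c n (M.postInfo b a z)))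
    else Classical.arbitrary A

/-- The action distribution of the finite-horizon optimal strategy `σFO_k`. -/
def actFO [Nonempty A] (M : POMDP S A Z) (T : Set S) (c : S → A → ℝ) (k : ℕ) (h : Hist S A) :
    A → ℝ :=
  fun a => if a = M.foAct T c (k - h.2.length) (M.infoOf h) then 1 else 0

lemma length_eq_of_obsHist {h h' : Hist S A} {O : S → Z} (he : obsHist O h = obsHist O h') :
    h.2.length = h'.2.length := by
  have := congrArg (fun x => (Prod.snd x).length) he
  simpa [obsHist] using this

/-- The (allowed-action-restricted) finite-horizon optimal strategy `σFO_k`. -/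
def stratFO [Nonempty A] (M : POMDP S A Z) (T : Set S) (c : S → A → ℝ) (k : ℕ) :
    Strategy S A Z M.obs where
  act := M.actFO T c k
  act_nonneg := by intro h a; unfold actFO; split_ifs <;> norm_num
  act_sum := by intro h; unfold actFO; simp
  obsBased := by
    intro h h' hobs
    have hlen : h.2.length = h'.2.length := length_eq_of_obsHist hobs
    have hinfo : M.infoOf h = M.infoOf h' := by
      unfold infoOf
      exact M.infoOfAux_obs h.2 h'.2 h.1 h'.1
        (congrArg Prod.snd hobs) (congrArg Prod.fst hobs)
    unfold actFO
    rw [hlen, hinfo]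

/-- The strategy `σ*_k`: play `σFO_k` for the first `k` steps, then `σ_Allow`. -/
def stratStar [Nonempty A] (M : POMDP S A Z) (T : Set S) (c : S → A → ℝ) (k : ℕ) :
    Strategy S A Z M.obs where
  act := fun h =>
    if h.2.length < k then M.actFO T c k h else M.actAllowFrom T M.suppInitF h
  act_nonneg := by
    intro h a; split_ifs with hl
    · exact (M.stratFO T c k).act_nonneg h a
    · exact (M.stratAllowFrom T M.suppInitF).act_nonneg h a
  act_sum := by
    intro h; split_ifs with hl
    · exact (M.stratFO T c k).act_sum h
    · exact (M.stratAllowFrom T M.suppInitF).act_sum h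
  obsBased := by
    intro h h' hobs
    have hlen : h.2.length = h'.2.length := length_eq_of_obsHist hobs
    rw [hlen]
    split_ifs with hl
    · exact (M.stratFO T c k).obsBased h h' hobs
    · exact (M.stratAllowFrom T M.suppInitF).obsBased h h' hobs

/-- `α_k`: the probability that `T` is not reached within the first `k`
steps when playing `σ*_k`. -/
def alphaK [Nonempty A] (M : POMDP S A Z) (T : Set S) (c : S → A → ℝ) (k : ℕ) : ℝ :=
  1 - M.probReachBy T (M.stratStar T c k) k

end POMDP

/-!
A history of length `k` that avoids `T` costs at least `k`, so `k * α_k` is at most the expected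
cost of the first `k` steps of `σ*_k`, during which `σ*_k` is `σFO_k`. Since `σFO_k` picks
minimizing allowed actions, and allowed actions keep the belief-support almost-sure winning, its
`k`-step expected cost is at most `V*_k(λ₀)`. Conversely, an almost-sure winning strategy plays
with positive probability only allowed actions (every belief-support it reaches with positive
probability is still almost-sure winning), so its `k`-step expected cost, and hence its value,
is at least `V*_k(λ₀)`. Taking the infimum gives `k * α_k ≤ optCost`.
-/

open scoped Topology

lemma iSup_sum_mul_eq_one_iff {ι : Type*} [Fintype ι] {w : ι → ℝ} {v : ι → ℕ → ℝ}
    (hw : ∀ i, 0 ≤ w i) (hw1 : ∑ i, w i = 1) (hv : ∀ i, Monotone (v i))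
    (hv1 : ∀ i n, v i n ≤ 1) :
    ⨆ n, ∑ i, w i * v i n = 1 ↔ ∀ i, 0 < w i → ⨆ n, v i n = 1 := by
  have hlim (i : ι) : Tendsto (v i) atTop (𝓝 (⨆ n, v i n)) :=
    tendsto_atTop_ciSup (hv i) ⟨1, Set.forall_mem_range.mpr (hv1 i)⟩
  have hmono : Monotone fun n => ∑ i, w i * v i n :=
    fun m n hmn => sum_le_sum fun i _ => mul_le_mul_of_nonneg_left (hv i hmn) (hw i)
  rw [(isLUB_of_tendsto_atTop hmono
    (tendsto_finsetSum _ fun i _ => (hlim i).const_mul (w i))).ciSup_eq]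
  have hgap : ∀ i ∈ univ, 0 ≤ w i * (1 - ⨆ n, v i n) :=
    fun i _ => mul_nonneg (hw i) (sub_nonneg.mpr (ciSup_le (hv1 i)))
  have hsum : ∑ i, w i * (1 - ⨆ n, v i n) = 1 - ∑ i, w i * ⨆ n, v i n := by
    simp only [mul_sub, mul_one, sum_sub_distrib, hw1]
  rw [← sub_eq_zero, ← neg_eq_zero, neg_sub, ← hsum, sum_eq_zero_iff_of_nonneg hgap]
  refine forall_congr' fun i => ?_
  rcases (hw i).eq_or_lt with hi | hi
  · simp [← hi]
  · simp only [mem_univ, true_implies, mul_eq_zero, hi.ne', false_or, hi, sub_eq_zero]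
    exact eq_comm

namespace POMDP

variable {S A Z : Type} [Fintype S] [Fintype A] [Fintype Z]

section Histories

def firstState : S → List (A × S) → S
  | s, [] => s
  | _, (_, s') :: l => firstState s' l

@[simp] lemma firstState_append (t : S) (l : List (A × S)) (a : A) (s : S) :
    firstState t (l ++ [(a, s)]) = s := by
  induction l generalizing t with
  | nil => rfl
  | cons p l ih => exact ih p.2

def histsOfLength (S A : Type) [Fintype S] [Fintype A] : ℕ → Finset (Hist S A)
  | 0 => univ.image fun s => (s, [])
  | n + 1 => (univ ×ˢ univ ×ˢ histsOfLength S A n).image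
      fun p : S × A × Hist S A => (p.2.2.1, p.2.2.2 ++ [(p.2.1, p.1)])

lemma mem_histsOfLength {n : ℕ} {h : Hist S A} : h ∈ histsOfLength S A n ↔ h.2.length = n := by
  induction n generalizing h with
  | zero =>
    obtain ⟨t, l⟩ := h
    simp [histsOfLength, eq_comm]
  | succ n ih =>
    obtain ⟨t, l⟩ := h
    simp only [histsOfLength, mem_image, mem_product, mem_univ, true_and, ih]
    constructor
    · rintro ⟨⟨s, a, t', l'⟩, hl', he⟩
      simp only [Prod.mk.injEq] at he
      obtain ⟨rfl, rfl⟩ := he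
      simp [hl']
    · intro hl
      rcases l.eq_nil_or_concat' with rfl | ⟨l', ⟨a, s⟩, rfl⟩
      · simp at hl
      · exact ⟨⟨s, a, t, l'⟩, by simpa using hl, rfl⟩

lemma sum_histsOfLength_zero (f : Hist S A → ℝ) :
    ∑ h ∈ histsOfLength S A 0, f h = ∑ s, f (s, []) :=
  sum_image fun _ _ _ _ he => congrArg Prod.fst he

lemma sum_histsOfLength_succ (n : ℕ) (f : Hist S A → ℝ) :
    ∑ h ∈ histsOfLength S A (n + 1), f h
      = ∑ s, ∑ a, ∑ h ∈ histsOfLength S A n, f (h.1, h.2 ++ [(a, s)]) := by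
  rw [histsOfLength, sum_image, sum_product, sum_congr rfl fun s _ => sum_product _ _ _]
  rintro ⟨s, a, t, l⟩ - ⟨s', a', t', l'⟩ - he
  simp only [Prod.mk.injEq] at he
  obtain ⟨rfl, he⟩ := he
  obtain ⟨rfl, he⟩ := List.append_inj' he rfl
  simp_all

end Histories

section Weights

structure IsActKernel (act : Hist S A → A → ℝ) : Prop where
  nonneg : ∀ h a, 0 ≤ act h a
  sum_eq_one : ∀ h, ∑ a, act h a = 1

lemma _root_.Strategy.isActKernel {O : S → Z} (σ : Strategy S A Z O) : IsActKernel σ.act :=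
  ⟨σ.act_nonneg, σ.act_sum⟩

/-- The action kernel of the continuation after the first step `(s, a)` of a play (histories list
their steps in reverse order). -/
def shiftAct (act : Hist S A → A → ℝ) (a : A) (s : S) : Hist S A → A → ℝ :=
  fun h => act (h.1, h.2 ++ [(a, s)])

lemma IsActKernel.shiftAct {act : Hist S A → A → ℝ} (hact : IsActKernel act) (a : A) (s : S) :
    IsActKernel (shiftAct act a s) :=
  ⟨fun _ => hact.nonneg _, fun _ => hact.sum_eq_one _⟩

variable (M : POMDP S A Z)

/-- `hprobAux` for an arbitrary initial weight `ν` and action kernel `act`. -/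
def histWeight (ν : S → ℝ) (act : Hist S A → A → ℝ) : ℕ → S → List (A × S) → ℝ
  | 0, s, l => if l = [] then ν s else 0
  | _ + 1, _, [] => 0
  | n + 1, s, (a, s') :: l => histWeight ν act n s' l * act (s', l) a * M.δ s' a s

lemma hprobAux_eq_histWeight (σ : Strategy S A Z M.obs) (n : ℕ) (s : S) (l : List (A × S)) :
    M.hprobAux σ n s l = M.histWeight M.init σ.act n s l := by
  induction n generalizing s l with
  | zero => rfl
  | succ n ih =>
    rcases l with _ | ⟨⟨a, s'⟩, l⟩
    · rfl
    · simp only [hprobAux, histWeight, ih]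

lemma histWeight_eq_zero_of_length_ne (ν : S → ℝ) (act : Hist S A → A → ℝ) {n : ℕ} {s : S}
    {l : List (A × S)} (hl : l.length ≠ n) : M.histWeight ν act n s l = 0 := by
  induction n generalizing s l with
  | zero => simp_all [histWeight]
  | succ n ih =>
    rcases l with _ | ⟨⟨a, s'⟩, l⟩
    · rfl
    · simp [histWeight, ih (by simpa using hl)]

lemma histWeight_nonneg {ν : S → ℝ} (hν : ∀ s, 0 ≤ ν s) {act : Hist S A → A → ℝ}
    (hact : IsActKernel act) (n : ℕ) (s : S) (l : List (A × S)) :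
    0 ≤ M.histWeight ν act n s l := by
  induction n generalizing s l with
  | zero => unfold histWeight; split_ifs <;> simp [hν]
  | succ n ih =>
    rcases l with _ | ⟨⟨a, s'⟩, l⟩
    · exact le_rfl
    · exact mul_nonneg (mul_nonneg (ih _ _) (hact.nonneg _ _)) (M.δ_nonneg _ _ _)

lemma histWeight_append (ν : S → ℝ) (act : Hist S A → A → ℝ) (a : A) (s : S) (n : ℕ) (t : S)
    (l : List (A × S)) :
    M.histWeight ν act (n + 1) t (l ++ [(a, s)])
      = ν s * act (s, []) a * M.histWeight (M.δ s a) (shiftAct act a s) n t l := by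
  induction l generalizing n t with
  | nil => cases n <;> simp [histWeight]
  | cons p l ih =>
    obtain ⟨b, u⟩ := p
    cases n with
    | zero => simp [histWeight]
    | succ n =>
      simp only [List.cons_append, histWeight, ih, shiftAct]
      ring

def histExpect (ν : S → ℝ) (act : Hist S A → A → ℝ) (n : ℕ) (f : Hist S A → ℝ) : ℝ :=
  ∑ h ∈ histsOfLength S A n, M.histWeight ν act n h.1 h.2 * f h

lemma histExpect_zero (ν : S → ℝ) (act : Hist S A → A → ℝ) (f : Hist S A → ℝ) :
    M.histExpect ν act 0 f = ∑ s, ν s * f (s, []) := by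
  simp [histExpect, sum_histsOfLength_zero, histWeight]

lemma histExpect_succ (ν : S → ℝ) (act : Hist S A → A → ℝ) (n : ℕ) (f : Hist S A → ℝ) :
    M.histExpect ν act (n + 1) f = ∑ s, ∑ a, ν s * act (s, []) a *
      M.histExpect (M.δ s a) (shiftAct act a s) n (fun h => f (h.1, h.2 ++ [(a, s)])) := by
  simp only [histExpect, sum_histsOfLength_succ, histWeight_append, mul_sum, mul_assoc]

lemma tsum_histWeight_mul (ν : S → ℝ) (act : Hist S A → A → ℝ) (n : ℕ) (f : Hist S A → ℝ) :
    ∑' h : Hist S A, M.histWeight ν act n h.1 h.2 * f h = M.histExpect ν act n f := by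
  refine tsum_eq_sum fun h hh => ?_
  rw [histWeight_eq_zero_of_length_ne M ν act (mt mem_histsOfLength.mpr hh), zero_mul]

end Weights

section Expectation

variable (M : POMDP S A Z) {act act₁ act₂ : Hist S A → A → ℝ} {ν : S → ℝ}

lemma histExpect_const (hact : IsActKernel act) (ν : S → ℝ) (n : ℕ) (r : ℝ) :
    M.histExpect ν act n (fun _ => r) = r * ∑ s, ν s := by
  induction n generalizing ν act with
  | zero => simp [histExpect_zero, mul_sum, mul_comm]
  | succ n ih =>
    simp only [histExpect_succ, ih (hact.shiftAct _ _), M.δ_sum, mul_sum]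
    refine sum_congr rfl fun s _ => ?_
    simp only [← mul_sum, ← sum_mul, hact.sum_eq_one]
    ring

lemma histExpect_mul_add_const (hact : IsActKernel act) (ν : S → ℝ) (n : ℕ)
    (f : Hist S A → ℝ) (r r' : ℝ) :
    M.histExpect ν act n (fun h => r * f h + r') = r * M.histExpect ν act n f + r' * ∑ s, ν s := by
  rw [← M.histExpect_const hact ν n r']
  simp only [histExpect, mul_sum, ← sum_add_distrib]
  exact sum_congr rfl fun _ _ => by ring

lemma histExpect_mono (hν : ∀ s, 0 ≤ ν s) (hact : IsActKernel act) (n : ℕ)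
    {f g : Hist S A → ℝ} (hfg : ∀ h : Hist S A, h.2.length = n → f h ≤ g h) :
    M.histExpect ν act n f ≤ M.histExpect ν act n g :=
  sum_le_sum fun h hh => mul_le_mul_of_nonneg_left (hfg h (mem_histsOfLength.mp hh))
    (M.histWeight_nonneg hν hact _ _ _)

/-- Conditioning on the last step instead of the first one. -/
lemma histExpect_succ_eq_last (ν : S → ℝ) (act : Hist S A → A → ℝ) (n : ℕ)
    (f : Hist S A → ℝ) :
    M.histExpect ν act (n + 1) f = M.histExpect ν act n
      (fun h => ∑ a, act h a * ∑ t, M.δ h.1 a t * f (t, (a, h.1) :: h.2)) := by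
  induction n generalizing ν act f with
  | zero => simp [histExpect_succ, histExpect_zero, mul_sum, mul_assoc]
  | succ n ih =>
    rw [histExpect_succ, histExpect_succ]
    simp only [ih]
    rfl

lemma histExpect_le_succ (hν : ∀ s, 0 ≤ ν s) (hact : IsActKernel act) (n : ℕ)
    {f : Hist S A → ℝ} (hf : ∀ (h : Hist S A) a t, f h ≤ f (t, (a, h.1) :: h.2)) :
    M.histExpect ν act n f ≤ M.histExpect ν act (n + 1) f := by
  rw [histExpect_succ_eq_last]
  refine M.histExpect_mono hν hact n fun h _ => ?_
  calc f h = ∑ a, act h a * ∑ t, M.δ h.1 a t * f h := by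
        simp [← sum_mul, M.δ_sum, hact.sum_eq_one]
    _ ≤ _ := sum_le_sum fun a _ => mul_le_mul_of_nonneg_left
        (sum_le_sum fun t _ => mul_le_mul_of_nonneg_left (hf h a t) (M.δ_nonneg _ _ _))
        (hact.nonneg _ _)

lemma histExpect_congr_of_length_lt {n : ℕ}
    (hag : ∀ h : Hist S A, h.2.length < n → act₁ h = act₂ h) (ν : S → ℝ) (f : Hist S A → ℝ) :
    M.histExpect ν act₁ n f = M.histExpect ν act₂ n f := by
  induction n generalizing act₁ act₂ ν f with
  | zero => simp [histExpect_zero]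
  | succ n ih =>
    have hshift (a : A) (s : S) (h : Hist S A) (hh : h.2.length < n) :
        shiftAct act₁ a s h = shiftAct act₂ a s h :=
      hag _ (by simpa using hh)
    simp only [histExpect_succ, hag (_, []) n.succ_pos]
    exact sum_congr rfl fun s _ => sum_congr rfl fun a _ => by rw [ih (hshift a s)]

lemma histExpect_congr_of_firstState
    (hag : ∀ h : Hist S A, ν (firstState h.1 h.2) ≠ 0 → act₁ h = act₂ h) (n : ℕ)
    (f : Hist S A → ℝ) :
    M.histExpect ν act₁ n f = M.histExpect ν act₂ n f := by
  cases n with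
  | zero => simp [histExpect_zero]
  | succ n =>
    simp only [histExpect_succ]
    refine sum_congr rfl fun s _ => ?_
    by_cases hs : ν s = 0
    · simp [hs]
    have hshift : ∀ a, shiftAct act₁ a s = shiftAct act₂ a s :=
      fun a => funext fun h => hag _ (by simpa using hs)
    simp only [hag (s, []) hs, hshift]

lemma histExpect_eq_sum_single (ν : S → ℝ) (act : Hist S A → A → ℝ) (n : ℕ)
    (f : Hist S A → ℝ) :
    M.histExpect ν act n f = ∑ t, ν t * M.histExpect (Pi.single t 1) act n f := by
  cases n <;> simp [histExpect_zero, histExpect_succ, Pi.single_apply, mul_sum, mul_assoc]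

end Expectation

lemma sum_single_mul (t : S) (g : S → ℝ) : ∑ s, (Pi.single t 1 : S → ℝ) s * g s = g t := by
  simp [Pi.single_apply]

section HistoryCost

variable (T : Set S) (c : S → A → ℝ)

@[simp] lemma visitsT_nil (s : S) : visitsT T ((s, []) : Hist S A) ↔ s ∈ T := by
  simp [visitsT]

lemma visitsT_cons (t : S) (a : A) (h : Hist S A) :
    visitsT T ((t, (a, h.1) :: h.2) : Hist S A) ↔ t ∈ T ∨ visitsT T h := by
  simp only [visitsT, List.mem_cons, exists_eq_or_imp]

lemma visitsT_append (h : Hist S A) (a : A) (s : S) :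
    visitsT T ((h.1, h.2 ++ [(a, s)]) : Hist S A) ↔ visitsT T h ∨ s ∈ T := by
  simp only [visitsT, List.mem_append, List.mem_singleton, or_and_right, exists_or,
    exists_eq_left, or_assoc]

lemma totalCostH_append (h : Hist S A) (a : A) (s : S) :
    totalCostH c (h.1, h.2 ++ [(a, s)]) = totalCostH c h + c s a := by
  obtain ⟨t, l⟩ := h
  induction l generalizing t with
  | nil => simp [totalCostH, totalCostAux]
  | cons p l ih =>
    simp only [totalCostH, List.cons_append, totalCostAux] at ih ⊢
    rw [ih]
    ring

lemma totalCostH_nonneg (hc : ∀ s a, 0 ≤ c s a) (h : Hist S A) : 0 ≤ totalCostH c h := by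
  obtain ⟨t, l⟩ := h
  induction l generalizing t with
  | nil => exact le_rfl
  | cons p l ih => exact add_nonneg (ih p.2) (hc _ _)

lemma length_le_totalCostH (hc1 : ∀ s ∉ T, ∀ a, 1 ≤ c s a) {h : Hist S A}
    (hh : ¬ visitsT T h) : (h.2.length : ℝ) ≤ totalCostH c h := by
  obtain ⟨t, l⟩ := h
  induction l generalizing t with
  | nil => simp [totalCostH, totalCostAux]
  | cons p l ih =>
    have hl : ¬ visitsT T (p.2, l) := fun hv => hh ((visitsT_cons T t p.1 (p.2, l)).mpr (Or.inr hv))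
    have hrest := ih p.2 hl
    have hstep := hc1 p.2 (fun hp => hl (Or.inl hp)) p.1
    simp only [List.length_cons, Nat.cast_succ, totalCostH, totalCostAux] at hrest ⊢
    linarith

end HistoryCost

section CostAndReach

variable (M : POMDP S A Z) (T : Set S) (c : S → A → ℝ) {act : Hist S A → A → ℝ} {ν : S → ℝ}

def expCost (ν : S → ℝ) (act : Hist S A → A → ℝ) (n : ℕ) : ℝ :=
  M.histExpect ν act n (totalCostH c)

def reachProb (ν : S → ℝ) (act : Hist S A → A → ℝ) (n : ℕ) : ℝ :=
  M.histExpect ν act n fun h => if visitsT T h then 1 else 0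

lemma expCost_zero (ν : S → ℝ) (act : Hist S A → A → ℝ) : M.expCost c ν act 0 = 0 := by
  simp [expCost, histExpect_zero, totalCostH, totalCostAux]

lemma expCost_succ (hact : IsActKernel act) (ν : S → ℝ) (n : ℕ) :
    M.expCost c ν act (n + 1) = ∑ s, ∑ a, ν s * act (s, []) a *
      (c s a + M.expCost c (M.δ s a) (shiftAct act a s) n) := by
  simp only [expCost, histExpect_succ, totalCostH_append]
  refine sum_congr rfl fun s _ => sum_congr rfl fun a _ => ?_
  have h := M.histExpect_mul_add_const (hact.shiftAct a s) (M.δ s a) n (totalCostH c) 1 (c s a)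
  simp only [one_mul, M.δ_sum, mul_one] at h
  rw [h, add_comm]

lemma reachProb_succ (hact : IsActKernel act) (ν : S → ℝ) (n : ℕ) :
    M.reachProb T ν act (n + 1) = ∑ s, ∑ a, ν s * act (s, []) a *
      (if s ∈ T then 1 else M.reachProb T (M.δ s a) (shiftAct act a s) n) := by
  simp only [reachProb, histExpect_succ, visitsT_append]
  refine sum_congr rfl fun s _ => sum_congr rfl fun a _ => ?_
  split_ifs with hs
  · simp [hs, M.histExpect_const (hact.shiftAct a s), M.δ_sum]
  · simp [hs]

lemma expCost_eq_sum_single (ν : S → ℝ) (act : Hist S A → A → ℝ) (n : ℕ) :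
    M.expCost c ν act n = ∑ t, ν t * M.expCost c (Pi.single t 1) act n :=
  M.histExpect_eq_sum_single ν act n _

lemma reachProb_eq_sum_single (ν : S → ℝ) (act : Hist S A → A → ℝ) (n : ℕ) :
    M.reachProb T ν act n = ∑ t, ν t * M.reachProb T (Pi.single t 1) act n :=
  M.histExpect_eq_sum_single ν act n _

lemma expCost_mono (hc : ∀ s a, 0 ≤ c s a) (hν : ∀ s, 0 ≤ ν s) (hact : IsActKernel act) :
    Monotone (M.expCost c ν act) :=
  monotone_nat_of_le_succ fun n =>
    M.histExpect_le_succ hν hact n fun _ _ _ => le_add_of_nonneg_right (hc _ _)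

lemma reachProb_mono (hν : ∀ s, 0 ≤ ν s) (hact : IsActKernel act) :
    Monotone (M.reachProb T ν act) := by
  refine monotone_nat_of_le_succ fun n => M.histExpect_le_succ hν hact n fun h a t => ?_
  by_cases hh : visitsT T h
  · simp [hh, (visitsT_cons T t a h).mpr (Or.inr hh)]
  · simp only [hh, if_false]
    split_ifs <;> norm_num

lemma reachProb_le_sum (hν : ∀ s, 0 ≤ ν s) (hact : IsActKernel act) (n : ℕ) :
    M.reachProb T ν act n ≤ ∑ s, ν s := by
  calc M.reachProb T ν act n ≤ M.histExpect ν act n (fun _ => 1) :=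
        M.histExpect_mono hν hact n fun h _ => by split_ifs <;> norm_num
    _ = ∑ s, ν s := by rw [M.histExpect_const hact, one_mul]

lemma reachProb_single_of_mem (hact : IsActKernel act) {t : S} (ht : t ∈ T) (n : ℕ) :
    M.reachProb T (Pi.single t 1) act n = 1 := by
  cases n with
  | zero => rw [reachProb, histExpect_zero, sum_single_mul]; simp [ht]
  | succ n =>
    simp only [reachProb_succ M T hact, mul_assoc, ← mul_sum, sum_single_mul, if_pos ht, mul_one,
      hact.sum_eq_one]

/-- Every history of length `n` that avoids `T` costs at least `n`. -/
lemma mul_one_sub_reachProb_le_expCost (hc : ∀ s a, 0 ≤ c s a)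
    (hc1 : ∀ s ∉ T, ∀ a, 1 ≤ c s a) (hν : ∀ s, 0 ≤ ν s) (hν1 : ∑ s, ν s = 1)
    (hact : IsActKernel act) (n : ℕ) :
    (n : ℝ) * (1 - M.reachProb T ν act n) ≤ M.expCost c ν act n := by
  have h := M.histExpect_mul_add_const hact ν n (fun h => if visitsT T h then 1 else 0) (-n) n
  rw [hν1, mul_one] at h
  calc (n : ℝ) * (1 - M.reachProb T ν act n)
      = M.histExpect ν act n (fun h => -n * (if visitsT T h then 1 else 0) + n) := by
        rw [h, reachProb]; ring
    _ ≤ M.expCost c ν act n := M.histExpect_mono hν hact n fun h hh => by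
        by_cases hv : visitsT T h
        · simpa [hv] using totalCostH_nonneg c hc h
        · simpa [hv, hh] using length_le_totalCostH T c hc1 hv

end CostAndReach

section Bridge

variable (M : POMDP S A Z) (T : Set S) (c : S → A → ℝ)

lemma probReachBy_eq_reachProb (σ : Strategy S A Z M.obs) (n : ℕ) :
    M.probReachBy T σ n = M.reachProb T M.init σ.act n := by
  rw [probReachBy, reachProb, ← tsum_histWeight_mul]
  refine tsum_congr fun h => ?_
  simp [hprob, hprobAux_eq_histWeight]

lemma expTotalSteps_eq_expCost (σ : Strategy S A Z M.obs) (n : ℕ) :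
    M.expTotalSteps c σ n = M.expCost c M.init σ.act n := by
  rw [expTotalSteps, expCost, ← tsum_histWeight_mul]
  simp [hprob, hprobAux_eq_histWeight]

lemma expCost_le_Val (hc : ∀ s a, 0 ≤ c s a) (σ : Strategy S A Z M.obs) (n : ℕ) :
    (M.expCost c M.init σ.act n : EReal) ≤ M.Val c σ := by
  refine le_limsup_of_frequently_le' (Eventually.frequently ?_)
  filter_upwards [eventually_ge_atTop n] with m hm
  rw [expTotalSteps_eq_expCost, EReal.coe_le_coe_iff]
  exact M.expCost_mono c hc M.init_nonneg σ.isActKernel hm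

def AlmostSureFrom (ν : S → ℝ) (act : Hist S A → A → ℝ) : Prop :=
  ⨆ n, M.reachProb T ν act n = 1

lemma almostSure_iff (σ : Strategy S A Z M.obs) :
    M.AlmostSure T σ ↔ M.AlmostSureFrom T M.init σ.act := by
  simp only [AlmostSure, probReach, probReachBy_eq_reachProb, AlmostSureFrom]

lemma histWeight_reinit (U : Finset S) (hU : U.Nonempty)
    (hobs : ∀ s ∈ U, ∀ s' ∈ U, M.obs s = M.obs s') :
    (M.reinit U hU hobs).histWeight = M.histWeight := by
  funext ν act n s l
  induction n generalizing s l with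
  | zero => rfl
  | succ n ih =>
    rcases l with _ | ⟨⟨a, s'⟩, l⟩
    · rfl
    · simp only [histWeight, ih]
      rfl

lemma mem_beliefWin_iff {U : Finset S} : U ∈ M.BeliefWin T ↔
    ∃ (_ : U.Nonempty) (_ : ∀ s ∈ U, ∀ s' ∈ U, M.obs s = M.obs s'),
      ∃ σ : Strategy S A Z M.obs, M.AlmostSureFrom T (uniformS U) σ.act := by
  refine exists_congr fun hU => exists_congr fun hobs => exists_congr fun σ => ?_
  refine ((M.reinit U hU hobs).almostSure_iff T σ).trans ?_
  simp only [AlmostSureFrom, reachProb, histExpect, histWeight_reinit]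
  rfl

end Bridge

section InfoStates

lemma normalize_apply (f : S → ℝ) (t : S) : normalize f t = f t / ∑ u, f u := rfl

lemma normalize_of_sum_eq_one {f : S → ℝ} (h : ∑ u, f u = 1) : normalize f = f :=
  funext fun t => by rw [normalize_apply, h, div_one]

lemma normalize_normalize (f : S → ℝ) : normalize (normalize f) = normalize f := by
  by_cases h : ∑ u, f u = 0
  · funext t
    simp [normalize_apply, h]
  · exact normalize_of_sum_eq_one (by simp only [normalize_apply, ← sum_div, div_self h])

variable (M : POMDP S A Z) {ν : S → ℝ}

structure IsInfoState (ν : S → ℝ) : Prop where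
  nonneg : ∀ s, 0 ≤ ν s
  sum_eq_one : ∑ s, ν s = 1
  obs_eq : ∀ s s', ν s ≠ 0 → ν s' ≠ 0 → M.obs s = M.obs s'

lemma isInfoState_init : M.IsInfoState M.init :=
  ⟨M.init_nonneg, M.init_sum, fun s s' hs hs' =>
    M.init_obs s s' ((M.init_nonneg s).lt_of_ne' hs) ((M.init_nonneg s').lt_of_ne' hs')⟩

lemma isInfoState_uniformS {U : Finset S} (hU : U.Nonempty)
    (hobs : ∀ s ∈ U, ∀ s' ∈ U, M.obs s = M.obs s') : M.IsInfoState (uniformS U) :=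
  ⟨uniformS_nonneg U, uniformS_sum U hU, fun s s' hs hs' =>
    hobs s (uniformS_mem ((uniformS_nonneg U s).lt_of_ne' hs))
      s' (uniformS_mem ((uniformS_nonneg U s').lt_of_ne' hs'))⟩

lemma uniformS_ne_zero {U : Finset S} {s : S} (hs : s ∈ U) : uniformS U s ≠ 0 := by
  simp [uniformS, hs, ne_empty_of_mem hs]

lemma suppF_uniformS (U : Finset S) : suppF (uniformS U) = U := by
  ext s
  by_cases hs : s ∈ U
  · simp [suppF, hs, uniformS_ne_zero hs]
  · simp [suppF, uniformS, hs]

lemma suppF_init : suppF M.init = M.suppInitF := by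
  ext s
  simp [suppF, suppInitF, (M.init_nonneg s).lt_iff_ne']

lemma obsProb_nonneg (hν : ∀ s, 0 ≤ ν s) (a : A) (z : Z) : 0 ≤ M.obsProb ν a z :=
  sum_nonneg fun t _ => by
    split_ifs
    exacts [sum_nonneg fun s _ => mul_nonneg (hν s) (M.δ_nonneg s a t), le_rfl]

lemma postInfo_apply (ν : S → ℝ) (a : A) (z : Z) (t : S) :
    M.postInfo ν a z t
      = (if M.obs t = z then ∑ s, ν s * M.δ s a t else 0) / M.obsProb ν a z := rfl

lemma postInfo_nonneg (hν : ∀ s, 0 ≤ ν s) (a : A) (z : Z) (t : S) : 0 ≤ M.postInfo ν a z t := by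
  rw [postInfo_apply]
  refine div_nonneg ?_ (M.obsProb_nonneg hν a z)
  split_ifs
  exacts [sum_nonneg fun s _ => mul_nonneg (hν s) (M.δ_nonneg s a t), le_rfl]

lemma sum_postInfo {a : A} {z : Z} (hz : M.obsProb ν a z ≠ 0) : ∑ t, M.postInfo ν a z t = 1 := by
  simp only [postInfo_apply, ← sum_div]
  exact div_self hz

lemma obs_eq_of_postInfo_ne_zero {a : A} {z : Z} {t : S} (ht : M.postInfo ν a z t ≠ 0) :
    M.obs t = z := by
  by_contra h
  simp [postInfo_apply, h] at ht

/-- Also holds when `obsProb ν a z = 0`, where `postInfo ν a z` divides by zero. -/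
lemma obsProb_mul_postInfo (hν : ∀ s, 0 ≤ ν s) (a : A) (z : Z) (t : S) :
    M.obsProb ν a z * M.postInfo ν a z t
      = if M.obs t = z then ∑ s, ν s * M.δ s a t else 0 := by
  rcases eq_or_ne (M.obsProb ν a z) 0 with hz | hz
  · have hg : ∀ u ∈ univ, 0 ≤ if M.obs u = z then ∑ s, ν s * M.δ s a u else 0 := fun u _ => by
      split_ifs
      exacts [sum_nonneg fun s _ => mul_nonneg (hν s) (M.δ_nonneg s a u), le_rfl]
    rw [hz, zero_mul, eq_comm]
    exact (sum_eq_zero_iff_of_nonneg hg).mp hz t (mem_univ t)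
  · rw [postInfo_apply, mul_div_cancel₀ _ hz]

lemma suppF_postInfo (hν : ∀ s, 0 ≤ ν s) (a : A) (z : Z) :
    suppF (M.postInfo ν a z) = M.updateF (suppF ν) z a := by
  ext t
  have hpos : 0 < M.postInfo ν a z t ↔ 0 < M.obsProb ν a z * M.postInfo ν a z t := by
    rcases (M.obsProb_nonneg hν a z).eq_or_lt with hz | hz
    · simp [postInfo_apply, ← hz]
    · exact (mul_pos_iff_of_pos_left hz).symm
  rw [M.obsProb_mul_postInfo hν] at hpos
  have hνpos (s : S) : 0 < ν s ↔ ν s ≠ 0 := (hν s).lt_iff_ne'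
  simp only [suppF, updateF, mem_filter, mem_univ, true_and,
    ← (M.postInfo_nonneg hν a z t).lt_iff_ne', hpos]
  split_ifs with h
  · simp only [h, true_and, sum_pos_iff_of_nonneg fun s _ => mul_nonneg (hν s) (M.δ_nonneg s a t),
      mem_univ]
    refine exists_congr fun s => ⟨fun hs => ⟨(hνpos s).1 ?_, ?_⟩, fun hs => ?_⟩
    exacts [pos_of_mul_pos_left hs (M.δ_nonneg s a t), pos_of_mul_pos_right hs (hν s),
      mul_pos ((hνpos s).2 hs.1) hs.2]
  · simp [h]

variable {M} in
lemma IsInfoState.exists_ne_zero (hν : M.IsInfoState ν) : ∃ s, ν s ≠ 0 := by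
  obtain ⟨s, -, hs⟩ := exists_ne_zero_of_sum_ne_zero (hν.sum_eq_one.trans_ne one_ne_zero)
  exact ⟨s, hs⟩

variable {M} in
lemma IsInfoState.postInfo (hν : M.IsInfoState ν) {a : A} {z : Z} (hz : M.obsProb ν a z ≠ 0) :
    M.IsInfoState (M.postInfo ν a z) :=
  ⟨M.postInfo_nonneg hν.nonneg a z, M.sum_postInfo hz, fun _ _ h h' => by
    rw [M.obs_eq_of_postInfo_ne_zero h, M.obs_eq_of_postInfo_ne_zero h']⟩

/-- `infoOfAux` for an arbitrary initial distribution `ν`. -/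
def infoFrom (ν : S → ℝ) : S → List (A × S) → S → ℝ
  | s, [] => normalize fun t => if M.obs t = M.obs s then ν t else 0
  | s, (a, s') :: l => M.postInfo (infoFrom ν s' l) a (M.obs s)

lemma infoOfAux_eq_infoFrom (s : S) (l : List (A × S)) :
    M.infoOfAux s l = M.infoFrom M.init s l := by
  induction l generalizing s with
  | nil => rfl
  | cons p l ih => simp only [infoOfAux, infoFrom, ih]; rfl

lemma infoFrom_nil (hν : M.IsInfoState ν) {s : S} (hs : ν s ≠ 0) : M.infoFrom ν s [] = ν := by
  have hrestrict : (fun t => if M.obs t = M.obs s then ν t else 0) = ν := funext fun t => by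
    by_cases ht : ν t = 0
    · simp [ht]
    · simp [hν.obs_eq t s ht hs]
  rw [infoFrom, hrestrict, normalize_of_sum_eq_one hν.sum_eq_one]

lemma infoFrom_append (hν : M.IsInfoState ν) {s : S} (hs : ν s ≠ 0) (a : A) (t : S)
    (l : List (A × S)) :
    M.infoFrom ν t (l ++ [(a, s)]) = M.infoFrom (M.postInfo ν a (M.obs (firstState t l))) t l := by
  induction l generalizing t with
  | nil =>
    have hrestrict : (fun u => if M.obs u = M.obs t then M.postInfo ν a (M.obs t) u else 0)
        = M.postInfo ν a (M.obs t) := funext fun u => by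
      by_cases hu : M.postInfo ν a (M.obs t) u = 0
      · simp [hu]
      · simp [M.obs_eq_of_postInfo_ne_zero hu]
    show M.postInfo (M.infoFrom ν s []) a (M.obs t)
      = normalize fun u => if M.obs u = M.obs t then M.postInfo ν a (M.obs t) u else 0
    rw [M.infoFrom_nil hν hs, hrestrict, postInfo, normalize_normalize]
  | cons p l ih => simp only [List.cons_append, infoFrom, ih, firstState]

end InfoStates

section AlmostSure

variable (M : POMDP S A Z) (T : Set S) {act : Hist S A → A → ℝ} {ν : S → ℝ}

lemma almostSureFrom_iff_single (hν : ∀ s, 0 ≤ ν s) (hν1 : ∑ s, ν s = 1)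
    (hact : IsActKernel act) :
    M.AlmostSureFrom T ν act ↔ ∀ t, 0 < ν t → M.AlmostSureFrom T (Pi.single t 1) act := by
  have hsingle (t : S) : 0 ≤ (Pi.single t 1 : S → ℝ) := Pi.single_nonneg.mpr zero_le_one
  simp only [AlmostSureFrom, M.reachProb_eq_sum_single T ν act]
  exact iSup_sum_mul_eq_one_iff hν hν1 (fun t => M.reachProb_mono T (hsingle t) hact)
    fun t n => (M.reachProb_le_sum T (hsingle t) hact n).trans_eq (by simp)

lemma almostSureFrom_single_of_mem (hact : IsActKernel act) {t : S} (ht : t ∈ T) :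
    M.AlmostSureFrom T (Pi.single t 1) act := by
  simp [AlmostSureFrom, M.reachProb_single_of_mem T hact ht]

lemma almostSureFrom_step (hν : ∀ s, 0 ≤ ν s) (hν1 : ∑ s, ν s = 1) (hact : IsActKernel act)
    (hwin : M.AlmostSureFrom T ν act) {s : S} (hs : 0 < ν s) (hsT : s ∉ T) {a : A}
    (ha : 0 < act (s, []) a) : M.AlmostSureFrom T (M.δ s a) (shiftAct act a s) := by
  have hsucc : ⨆ n, M.reachProb T ν act (n + 1) = 1 := by
    rwa [(M.reachProb_mono T hν hact).ciSup_comp_tendsto_atTop_of_linearOrder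
      (tendsto_add_atTop_nat 1)]
  simp only [M.reachProb_succ T hact, ← Fintype.sum_prod_type'] at hsucc
  have hwin_sa := (iSup_sum_mul_eq_one_iff (fun x => mul_nonneg (hν x.1) (hact.nonneg _ x.2)) ?_
    (fun x => ?_) (fun x n => ?_)).mp hsucc (s, a) (mul_pos hs ha)
  · simpa [hsT, AlmostSureFrom] using hwin_sa
  · rw [Fintype.sum_prod_type]
    simp [← mul_sum, hact.sum_eq_one, hν1]
  · split_ifs
    exacts [monotone_const, M.reachProb_mono T (M.δ_nonneg _ _) (hact.shiftAct _ _)]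
  · split_ifs
    exacts [le_rfl, (M.reachProb_le_sum T (M.δ_nonneg _ _) (hact.shiftAct _ _) n).trans_eq
      (M.δ_sum _ _)]

end AlmostSure

section Strategies

variable (M : POMDP S A Z)

lemma act_nil_eq_of_obs_eq (σ : Strategy S A Z M.obs) {s s' : S} (h : M.obs s = M.obs s') :
    σ.act (s, []) = σ.act (s', []) :=
  σ.obsBased _ _ (by simp [obsHist, h])

lemma shiftAct_eq_of_obs_eq (σ : Strategy S A Z M.obs) {s s' : S} (h : M.obs s = M.obs s')
    (a : A) : shiftAct σ.act a s = shiftAct σ.act a s' :=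
  funext fun _ => σ.obsBased _ _ (by simp [obsHist, h])

def shiftStrat (σ : Strategy S A Z M.obs) (a : A) (s : S) : Strategy S A Z M.obs where
  act := shiftAct σ.act a s
  act_nonneg _ := σ.act_nonneg _
  act_sum _ := σ.act_sum _
  obsBased h h' he := σ.obsBased _ _ (by
    simp only [obsHist, Prod.mk.injEq, List.map_append] at he ⊢
    exact ⟨he.1, by rw [he.2]⟩)

end Strategies

section Allowed

variable (M : POMDP S A Z) (T : Set S) {ν : S → ℝ}

lemma eq_of_absorbing (habs : M.Absorbing T) {s t : S} (hs : s ∈ T) {a : A}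
    (ht : 0 < M.δ s a t) : t = s := by
  by_contra hne
  have := add_le_sum (fun u _ => M.δ_nonneg s a u) (mem_univ s) (mem_univ t) (Ne.symm hne)
  linarith [M.δ_sum s a, habs s hs a]

lemma almostSureFrom_of_mem_updateF (habs : M.Absorbing T) (σ : Strategy S A Z M.obs)
    (hν : M.IsInfoState ν) (hwin : M.AlmostSureFrom T ν σ.act) {s₀ : S} (hs₀ : ν s₀ ≠ 0)
    {a : A} (ha : 0 < σ.act (s₀, []) a) {z : Z} {t : S} (ht : t ∈ M.updateF (suppF ν) z a) :
    M.AlmostSureFrom T (Pi.single t 1) (shiftAct σ.act a s₀) := by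
  obtain ⟨-, s, hs, hst⟩ := (mem_filter.mp ht).2
  have hs : ν s ≠ 0 := (mem_filter.mp hs).2
  by_cases hsT : s ∈ T
  · exact M.almostSureFrom_single_of_mem T (σ.isActKernel.shiftAct a s₀)
      (M.eq_of_absorbing T habs hsT hst ▸ hsT)
  have hobs := hν.obs_eq s s₀ hs hs₀
  rw [← M.shiftAct_eq_of_obs_eq σ hobs]
  rw [← M.act_nil_eq_of_obs_eq σ hobs] at ha
  have hstep := M.almostSureFrom_step T hν.nonneg hν.sum_eq_one σ.isActKernel hwin
    ((hν.nonneg s).lt_of_ne' hs) hsT ha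
  exact (M.almostSureFrom_iff_single T (M.δ_nonneg s a) (M.δ_sum s a)
    (σ.isActKernel.shiftAct a s)).mp hstep t hst

lemma almostSureFrom_postInfo (habs : M.Absorbing T) (σ : Strategy S A Z M.obs)
    (hν : M.IsInfoState ν) (hwin : M.AlmostSureFrom T ν σ.act) {s₀ : S} (hs₀ : ν s₀ ≠ 0)
    {a : A} (ha : 0 < σ.act (s₀, []) a) {z : Z} (hz : M.obsProb ν a z ≠ 0) :
    M.AlmostSureFrom T (M.postInfo ν a z) (shiftAct σ.act a s₀) := by
  refine (M.almostSureFrom_iff_single T (M.postInfo_nonneg hν.nonneg a z) (M.sum_postInfo hz)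
    (σ.isActKernel.shiftAct a s₀)).mpr fun t ht => ?_
  refine M.almostSureFrom_of_mem_updateF T habs σ hν hwin hs₀ ha (z := z) ?_
  rw [← M.suppF_postInfo hν.nonneg, suppF, mem_filter]
  exact ⟨mem_univ t, ht.ne'⟩

lemma mem_allowSet (habs : M.Absorbing T) (σ : Strategy S A Z M.obs) (hν : M.IsInfoState ν)
    (hwin : M.AlmostSureFrom T ν σ.act) {s₀ : S} (hs₀ : ν s₀ ≠ 0) {a : A}
    (ha : 0 < σ.act (s₀, []) a) : a ∈ M.AllowSet T (suppF ν) := by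
  intro z hz
  refine (M.mem_beliefWin_iff T).mpr ⟨hz, fun x hx y hy => ?_, M.shiftStrat σ a s₀, ?_⟩
  · rw [(mem_filter.mp hx).2.1, (mem_filter.mp hy).2.1]
  · refine (M.almostSureFrom_iff_single T (uniformS_nonneg _) (uniformS_sum _ hz)
      (σ.isActKernel.shiftAct a s₀)).mpr fun t ht => ?_
    exact M.almostSureFrom_of_mem_updateF T habs σ hν hwin hs₀ ha (uniformS_mem ht)

lemma suppF_postInfo_mem_beliefWin (hν : M.IsInfoState ν) {a : A}
    (ha : a ∈ M.AllowSet T (suppF ν)) {z : Z} (hz : M.obsProb ν a z ≠ 0) :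
    suppF (M.postInfo ν a z) ∈ M.BeliefWin T := by
  obtain ⟨t, ht⟩ := (hν.postInfo hz).exists_ne_zero
  have hsupp := M.suppF_postInfo hν.nonneg a z
  rw [hsupp]
  exact ha z ⟨t, hsupp ▸ mem_filter.mpr ⟨mem_univ t, ht⟩⟩

lemma allowFin_nonempty (habs : M.Absorbing T) {U : Finset S} (hU : U ∈ M.BeliefWin T) :
    (M.allowFin T U).Nonempty := by
  obtain ⟨hUne, hobs, σ, hwin⟩ := (M.mem_beliefWin_iff T).mp hU
  obtain ⟨s₀, hs₀⟩ := hUne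
  obtain ⟨a, -, ha⟩ := exists_lt_of_sum_lt (s := univ) (f := 0) (g := σ.act (s₀, []))
    (by simp [σ.act_sum])
  have hmem := M.mem_allowSet T habs σ (M.isInfoState_uniformS ⟨s₀, hs₀⟩ hobs) hwin
    (uniformS_ne_zero hs₀) ha
  rw [suppF_uniformS] at hmem
  exact ⟨a, mem_filter.mpr ⟨mem_univ a, hmem⟩⟩

end Allowed

section Bellman

variable (M : POMDP S A Z) (T : Set S) (c : S → A → ℝ) {ν : S → ℝ}

lemma sum_obsProb_mul_sum_postInfo (hν : ∀ s, 0 ≤ ν s) (a : A) (φ : Z → S → ℝ) :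
    ∑ z, M.obsProb ν a z * ∑ t, M.postInfo ν a z t * φ z t
      = ∑ t, (∑ s, ν s * M.δ s a t) * φ (M.obs t) t := by
  simp only [mul_sum, ← mul_assoc, M.obsProb_mul_postInfo hν]
  rw [sum_comm]
  simp [ite_mul]

lemma expCost_eq_sum_single_of_obs {ν : S → ℝ} {act : Hist S A → A → ℝ}
    (G : Z → Hist S A → A → ℝ) (hG : ∀ h : Hist S A, act h = G (M.obs (firstState h.1 h.2)) h)
    (n : ℕ) :
    M.expCost c ν act n = ∑ t, ν t * M.expCost c (Pi.single t 1) (G (M.obs t)) n := by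
  rw [expCost_eq_sum_single]
  refine sum_congr rfl fun t _ =>
    congrArg _ (M.histExpect_congr_of_firstState (fun h hh => ?_) n _)
  have ht : firstState h.1 h.2 = t := by
    by_contra h'
    simp [h'] at hh
  rw [hG h, ht]

/-- Bellman decomposition of the expected cost along the first observation. -/
lemma expCost_succ_eq_sum_obsProb {act : Hist S A → A → ℝ} (hν : M.IsInfoState ν)
    (hact : IsActKernel act) {s₀ : S} (G : A → Z → Hist S A → A → ℝ)
    (hfirst : ∀ s, ν s ≠ 0 → act (s, []) = act (s₀, []))
    (hshift : ∀ s, ν s ≠ 0 → ∀ a (h : Hist S A),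
      shiftAct act a s h = G a (M.obs (firstState h.1 h.2)) h) (n : ℕ) :
    M.expCost c ν act (n + 1) = ∑ a, act (s₀, []) a *
      (cinfo c ν a + ∑ z, M.obsProb ν a z * M.expCost c (M.postInfo ν a z) (G a z) n) := by
  have hcont (s : S) (hs : ν s ≠ 0) (a : A) : M.expCost c (M.δ s a) (shiftAct act a s) n
      = ∑ t, M.δ s a t * M.expCost c (Pi.single t 1) (G a (M.obs t)) n :=
    M.expCost_eq_sum_single_of_obs c (G a) (hshift s hs a) n
  rw [expCost_succ M c hact, sum_comm]
  refine sum_congr rfl fun a _ => ?_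
  set F : S → ℝ := fun t => M.expCost c (Pi.single t 1) (G a (M.obs t)) n
  have hpost : ∑ z, M.obsProb ν a z * M.expCost c (M.postInfo ν a z) (G a z) n
      = ∑ t, (∑ s, ν s * M.δ s a t) * F t := by
    rw [← M.sum_obsProb_mul_sum_postInfo hν.nonneg a fun z t =>
      M.expCost c (Pi.single t 1) (G a z) n]
    exact sum_congr rfl fun z _ => by rw [expCost_eq_sum_single]
  calc ∑ s, ν s * act (s, []) a * (c s a + M.expCost c (M.δ s a) (shiftAct act a s) n)
      = ∑ s, act (s₀, []) a * (ν s * c s a + ∑ t, ν s * M.δ s a t * F t) := by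
        refine sum_congr rfl fun s _ => ?_
        by_cases hs : ν s = 0
        · simp [hs]
        rw [hfirst s hs, hcont s hs a, mul_add, mul_add, mul_sum, mul_sum]
        congr 1
        · ring
        · exact sum_congr rfl fun t _ => by simp only [F]; ring
    _ = _ := by
        rw [hpost, cinfo, ← mul_sum, sum_add_distrib,
          sum_comm (f := fun s t => ν s * M.δ s a t * F t)]
        simp only [sum_mul]

def qValue (n : ℕ) (b : S → ℝ) (a : A) : ℝ :=
  cinfo c b a + ∑ z, M.obsProb b a z * M.Vstar T c n (M.postInfo b a z)

lemma Vstar_succ_le_qValue {n : ℕ} {b : S → ℝ} {a : A} (ha : a ∈ M.allowFin T (suppF b)) :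
    M.Vstar T c (n + 1) b ≤ M.qValue T c n b a := by
  rw [Vstar, dif_pos ⟨a, ha⟩]
  exact inf'_le _ ha

variable [Nonempty A]

lemma foAct_mem_allowFin {n : ℕ} {b : S → ℝ} (h : (M.allowFin T (suppF b)).Nonempty) :
    M.foAct T c (n + 1) b ∈ M.allowFin T (suppF b) := by
  rw [foAct, dif_pos h]
  exact (Classical.choose_spec (exists_mem_eq_inf' h _)).1

lemma Vstar_succ_eq_qValue_foAct {n : ℕ} {b : S → ℝ} (h : (M.allowFin T (suppF b)).Nonempty) :
    M.Vstar T c (n + 1) b = M.qValue T c n b (M.foAct T c (n + 1) b) := by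
  rw [Vstar, dif_pos h, foAct, dif_pos h]
  exact (Classical.choose_spec (exists_mem_eq_inf' h _)).2

end Bellman

section ValueBounds

variable (M : POMDP S A Z) (T : Set S) (c : S → A → ℝ)

/-- An almost-sure winning strategy plays only allowed actions, so its expected cost is bounded
below by the allowed-action value iteration. -/
lemma Vstar_le_expCost (habs : M.Absorbing T) (n : ℕ) {ν : S → ℝ} (σ : Strategy S A Z M.obs)
    (hν : M.IsInfoState ν) (hwin : M.AlmostSureFrom T ν σ.act) :
    M.Vstar T c n ν ≤ M.expCost c ν σ.act n := by
  induction n generalizing ν σ with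
  | zero => rw [expCost_zero]; rfl
  | succ n ih =>
    obtain ⟨s₀, hs₀⟩ := hν.exists_ne_zero
    rw [M.expCost_succ_eq_sum_obsProb c hν σ.isActKernel (s₀ := s₀) (fun a _ => shiftAct σ.act a s₀)
      (fun s hs => M.act_nil_eq_of_obs_eq σ (hν.obs_eq s s₀ hs hs₀))
      (fun s hs a h => by rw [M.shiftAct_eq_of_obs_eq σ (hν.obs_eq s s₀ hs hs₀)])]
    calc M.Vstar T c (n + 1) ν = ∑ a, σ.act (s₀, []) a * M.Vstar T c (n + 1) ν := by
          rw [← sum_mul, σ.act_sum, one_mul]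
      _ ≤ _ := sum_le_sum fun a _ => ?_
    rcases (σ.act_nonneg (s₀, []) a).eq_or_lt with ha | ha
    · simp [← ha]
    have hallow : a ∈ M.allowFin T (suppF ν) :=
      mem_filter.mpr ⟨mem_univ a, M.mem_allowSet T habs σ hν hwin hs₀ ha⟩
    refine mul_le_mul_of_nonneg_left ((M.Vstar_succ_le_qValue T c hallow).trans
      (add_le_add_right (sum_le_sum fun z _ => ?_) _)) ha.le
    rcases eq_or_ne (M.obsProb ν a z) 0 with hz | hz
    · simp [hz]
    exact mul_le_mul_of_nonneg_left (ih (M.shiftStrat σ a s₀) (hν.postInfo hz)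
      (M.almostSureFrom_postInfo T habs σ hν hwin hs₀ ha hz)) (M.obsProb_nonneg hν.nonneg a z)

variable [Nonempty A]

/-- `σFO` with `n` steps to go, tracking information states from the initial distribution `ν`. -/
def foKernel (ν : S → ℝ) (n : ℕ) (h : Hist S A) (b : A) : ℝ :=
  if b = M.foAct T c (n - h.2.length) (M.infoFrom ν h.1 h.2) then 1 else 0

lemma isActKernel_foKernel (ν : S → ℝ) (n : ℕ) : IsActKernel (M.foKernel T c ν n) :=
  ⟨fun _ _ => by unfold foKernel; split_ifs <;> norm_num, fun _ => by simp [foKernel]⟩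

lemma stratStar_act_eq_foKernel {k : ℕ} {h : Hist S A} (hh : h.2.length < k) :
    (M.stratStar T c k).act h = M.foKernel T c M.init k h := by
  funext b
  simp only [stratStar, if_pos hh, actFO, foKernel, infoOf, infoOfAux_eq_infoFrom]

lemma foKernel_nil {ν : S → ℝ} (hν : M.IsInfoState ν) {s : S} (hs : ν s ≠ 0) (n : ℕ) :
    M.foKernel T c ν n (s, []) = fun b => if b = M.foAct T c n ν then 1 else 0 := by
  funext b
  simp only [foKernel, List.length_nil, Nat.sub_zero, M.infoFrom_nil hν hs]

lemma shiftAct_foKernel {ν : S → ℝ} (hν : M.IsInfoState ν) {s : S} (hs : ν s ≠ 0) (n : ℕ)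
    (a : A) (h : Hist S A) :
    shiftAct (M.foKernel T c ν (n + 1)) a s h
      = M.foKernel T c (M.postInfo ν a (M.obs (firstState h.1 h.2))) n h := by
  funext b
  simp only [shiftAct, foKernel, M.infoFrom_append hν hs, List.length_append, List.length_singleton,
    Nat.add_sub_add_right]

lemma expCost_foKernel_le_Vstar (habs : M.Absorbing T) (n : ℕ) {ν : S → ℝ}
    (hν : M.IsInfoState ν) (hwin : suppF ν ∈ M.BeliefWin T) :
    M.expCost c ν (M.foKernel T c ν n) n ≤ M.Vstar T c n ν := by
  induction n generalizing ν with
  | zero => rw [expCost_zero]; rfl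
  | succ n ih =>
    obtain ⟨s₀, hs₀⟩ := hν.exists_ne_zero
    have hne := M.allowFin_nonempty T habs hwin
    rw [M.expCost_succ_eq_sum_obsProb c hν (M.isActKernel_foKernel T c ν (n + 1)) (s₀ := s₀)
      (fun a z => M.foKernel T c (M.postInfo ν a z) n)
      (fun s hs => by rw [M.foKernel_nil T c hν hs, M.foKernel_nil T c hν hs₀])
      (fun s hs a h => M.shiftAct_foKernel T c hν hs n a h),
      M.foKernel_nil T c hν hs₀, M.Vstar_succ_eq_qValue_foAct T c hne]
    simp only [ite_mul, one_mul, zero_mul, sum_ite_eq', mem_univ, if_true]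
    refine add_le_add_right (sum_le_sum fun z _ => ?_) _
    rcases eq_or_ne (M.obsProb ν (M.foAct T c (n + 1) ν) z) 0 with hz | hz
    · simp [hz]
    refine mul_le_mul_of_nonneg_left (ih (hν.postInfo hz) ?_) (M.obsProb_nonneg hν.nonneg _ z)
    exact M.suppF_postInfo_mem_beliefWin T hν (mem_filter.mp (M.foAct_mem_allowFin T c hne)).2 hz

end ValueBounds

end POMDP

/-- For `k ≥ 1`, `α_k ≤ optCost / k`. -/
theorem alphaK_le_optCost_div
    {S A Z : Type} [Fintype S] [Fintype A] [Fintype Z] [Nonempty A]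
    (M : POMDP S A Z) (T : Set S) (c : S → A → ℝ)
    (habs : M.Absorbing T)
    (hc0 : ∀ t ∈ T, ∀ a, c t a = 0)
    (hc1 : ∀ s ∉ T, ∀ a, 1 ≤ c s a)
    (hinit : M.suppInitF ∈ M.BeliefWin T)
    (k : ℕ) (hk : 1 ≤ k) :
    ((M.alphaK T c k : ℝ) : EReal) ≤ M.optCost T c / ((k : ℕ) : EReal) := by
  have hc (s : S) (a : A) : 0 ≤ c s a := by
    by_cases hs : s ∈ T
    · exact (hc0 s hs a).ge
    · exact zero_le_one.trans (hc1 s hs a)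
  have hinfo := M.isInfoState_init
  have hstar : (k : ℝ) * M.alphaK T c k ≤ M.Vstar T c k M.init :=
    calc (k : ℝ) * M.alphaK T c k ≤ M.expCost c M.init (M.stratStar T c k).act k := by
          rw [POMDP.alphaK, POMDP.probReachBy_eq_reachProb]
          exact M.mul_one_sub_reachProb_le_expCost T c hc hc1 hinfo.nonneg hinfo.sum_eq_one
            (M.stratStar T c k).isActKernel k
      _ = M.expCost c M.init (M.foKernel T c M.init k) k :=
          M.histExpect_congr_of_length_lt (fun _ => M.stratStar_act_eq_foKernel T c) _ _
      _ ≤ M.Vstar T c k M.init :=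
          M.expCost_foKernel_le_Vstar T c habs k hinfo (M.suppF_init ▸ hinit)
  have hopt : (((k : ℝ) * M.alphaK T c k : ℝ) : EReal) ≤ M.optCost T c :=
    le_iInf fun ⟨σ, hσ⟩ => (EReal.coe_le_coe_iff.mpr (hstar.trans
      (M.Vstar_le_expCost T c habs k σ hinfo ((M.almostSure_iff T σ).mp hσ)))).trans
      (M.expCost_le_Val c hc σ k)
  have hkpos : (0 : EReal) < (k : ℕ) := by exact_mod_cast hk
  rw [EReal.le_div_iff_mul_le hkpos (EReal.natCast_ne_top k), mul_comm]
  exact_mod_cast hopt
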